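/- For every real number t with 0 < t < 1, the representation π_t is unitary: π_t(g)* π_t(g) = I = π_t(g) π_t(g)* for every g ∈ G. -/

import Mathlib

/-!
On `span {δ_x, δ_y}` the edge operator `c_t(x,y)` acts by the matrix `[[w, t], [-t, w]]` with
`w² + t² = 1`, and it fixes every other `δ_v`. For real `t` this matrix is real orthogonal: its
adjoint is the edge operator for `-t`, which is also its inverse. Hence every `c_t(x,y)` on an
edge is unitary, and so is `c_t(x, g·x)`, a product of such along the geodesic. Finally `π(g)`
permutes the orthonormal basis `(δ_v)`, so it is unitary too.
-/

noncomputable section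

open scoped ComplexConjugate

/-- `ℓ²(X)`: the Hilbert space of square-summable complex functions on `X`. -/
abbrev ell2 (X : Type) : Type := lp (fun _ : X => ℂ) 2

/-- The Dirac function `δ_v` at a vertex `v`. -/
noncomputable def delta {X : Type} [DecidableEq X] (v : X) : ell2 X :=
  lp.single 2 v (1 : ℂ)

/-- `w = √(1 − z²)`, using the principal branch of the square root, which is
holomorphic off the negative real axis and positive on the positive reals. -/
noncomputable def W (z : ℂ) : ℂ := (1 - z ^ 2) ^ ((1 : ℂ) / 2)

/-- The defining property of the edge operator `c_z(x,y)` for adjacent vertices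
`x, y`: it sends `δ_x ↦ wδ_x − zδ_y`, `δ_y ↦ wδ_y + zδ_x`, and fixes `δ_v` for
every other vertex `v`. -/
def IsEdgeOp {X : Type} [DecidableEq X] (z : ℂ) (x y : X)
    (A : ell2 X →L[ℂ] ell2 X) : Prop :=
  A (delta x) = W z • delta x - z • delta y ∧
  A (delta y) = W z • delta y + z • delta x ∧
  ∀ v : X, v ≠ x → v ≠ y → A (delta v) = delta v

/-- The product `f(v₀,v₁) * f(v₁,v₂) * ⋯ * f(v_{n−1},v_n)` along a walk
`v₀, v₁, …, v_n`. -/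
def walkProd {X : Type} {T : SimpleGraph X} {E : Type} [Monoid E]
    (f : X → X → E) : {a b : X} → T.Walk a b → E
  | _, _, SimpleGraph.Walk.nil => 1
  | _, _, SimpleGraph.Walk.cons (u := u) (v := v) _ p => f u v * walkProd f p

section ell2
variable {X : Type} [DecidableEq X]

lemma inner_delta_left (u : X) (f : ell2 X) : inner ℂ (delta u) f = f u := by
  simp [delta, lp.inner_single_left]

lemma inner_delta_delta (u v : X) :
    inner ℂ (delta u) (delta v : ell2 X) = if u = v then 1 else 0 := by
  rw [inner_delta_left]
  simp [delta, lp.single_apply, Pi.single_apply]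

lemma ell2_ext_of_inner_delta {f g : ell2 X}
    (h : ∀ u, inner ℂ (delta u) f = inner ℂ (delta u) g) : f = g :=
  lp.ext <| funext fun u => by simpa only [inner_delta_left] using h u

lemma ContinuousLinearMap.ext_delta {A B : ell2 X →L[ℂ] ell2 X}
    (h : ∀ v, A (delta v) = B (delta v)) : A = B := by
  refine ContinuousLinearMap.ext fun f => ?_
  have hf := lp.hasSum_single (E := fun _ : X => ℂ) (p := 2) ENNReal.ofNat_ne_top f
  refine (hf.mapL A).unique ?_
  convert hf.mapL B using 2 with v
  rw [← mul_one (f v), ← smul_eq_mul, lp.single_smul, map_smul, map_smul]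
  exact congrArg _ (h v)

lemma ContinuousLinearMap.adjoint_apply_delta {A : ell2 X →L[ℂ] ell2 X} {v : X} {f : ell2 X}
    (h : ∀ u, inner ℂ (A (delta u)) (delta v) = inner ℂ (delta u) f) :
    adjoint A (delta v) = f :=
  ell2_ext_of_inner_delta fun u => by rw [adjoint_inner_right, h]

lemma ContinuousLinearMap.mem_unitary_of_apply_delta (σ : Equiv.Perm X)
    {U : ell2 X →L[ℂ] ell2 X} (hU : ∀ v, U (delta v) = delta (σ v)) :
    U ∈ unitary (ell2 X →L[ℂ] ell2 X) := by
  have hadj : ∀ v, adjoint U (delta v) = delta (σ.symm v) := fun v =>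
    adjoint_apply_delta fun u => by
      simp only [hU, inner_delta_delta, ← Equiv.eq_symm_apply]
  rw [Unitary.mem_iff, star_eq_adjoint]
  constructor <;> refine ext_delta fun v => ?_ <;> simp [hU, hadj]

end ell2

lemma W_sq (z : ℂ) : W z ^ 2 = 1 - z ^ 2 := by
  rw [W, one_div]
  exact Complex.cpow_nat_inv_pow _ two_ne_zero

lemma W_neg (z : ℂ) : W (-z) = W z := by
  rw [W, W, neg_sq]

lemma W_ofReal {t : ℝ} (ht : t ^ 2 ≤ 1) : W t = (√(1 - t ^ 2) : ℝ) := by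
  rw [Real.sqrt_eq_rpow, Complex.ofReal_cpow (by linarith), W]
  push_cast
  rfl

section edge
variable {X : Type} [DecidableEq X] {x y : X} {A B : ell2 X →L[ℂ] ell2 X}

open ContinuousLinearMap

lemma IsEdgeOp.mul_eq_one {z : ℂ} (hA : IsEdgeOp z x y A) (hB : IsEdgeOp (-z) x y B) :
    A * B = 1 := by
  obtain ⟨hAx, hAy, hA⟩ := hA
  obtain ⟨hBx, hBy, hB⟩ := hB
  rw [W_neg] at hBx hBy
  refine ext_delta fun v => ?_
  by_cases hvx : v = x
  · subst hvx
    simp only [mul_apply_eq_comp, one_apply_eq_self, hBx, map_sub, map_smul, hAx, hAy]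
    match_scalars <;> first | ring1 | linear_combination W_sq z
  by_cases hvy : v = y
  · subst hvy
    simp only [mul_apply_eq_comp, one_apply_eq_self, hBy, map_add, map_smul, hAx, hAy]
    match_scalars <;> first | ring1 | linear_combination W_sq z
  simp only [mul_apply_eq_comp, one_apply_eq_self, hB v hvx hvy, hA v hvx hvy]

lemma IsEdgeOp.adjoint {t : ℝ} (ht : t ^ 2 ≤ 1) (hxy : x ≠ y) (hA : IsEdgeOp t x y A) :
    IsEdgeOp (-t) x y (adjoint A) := by
  obtain ⟨hAx, hAy, hA⟩ := hA
  have hW : W (-t) = W t := W_neg _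
  have hWt : conj (W t) = W t := by rw [W_ofReal ht, Complex.conj_ofReal]
  refine ⟨?_, ?_, fun v hvx hvy => ?_⟩ <;> refine adjoint_apply_delta fun u => ?_
  all_goals
    obtain rfl | rfl | ⟨hux, huy⟩ : u = x ∨ u = y ∨ u ≠ x ∧ u ≠ y := by tauto
    all_goals first | rw [hAx] | rw [hAy] | rw [hA u hux huy]
    all_goals simp only [inner_sub_left, inner_add_left, inner_sub_right, inner_add_right,
      inner_smul_left, inner_smul_right, inner_delta_delta, Complex.conj_ofReal, hW, hWt]
    all_goals split_ifs <;> simp_all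

lemma IsEdgeOp.mem_unitary {t : ℝ} (ht : t ^ 2 ≤ 1) (hxy : x ≠ y) (hA : IsEdgeOp t x y A) :
    A ∈ unitary (ell2 X →L[ℂ] ell2 X) := by
  have hA' := hA.adjoint ht hxy
  rw [Unitary.mem_iff, star_eq_adjoint]
  exact ⟨hA'.mul_eq_one (by simpa using hA), hA.mul_eq_one (by simpa using hA')⟩

end edge

lemma walkProd_mem {X E : Type} {T : SimpleGraph X} [Monoid E] {f : X → X → E}
    {S : Submonoid E} (hf : ∀ u v, T.Adj u v → f u v ∈ S) {a b : X} (p : T.Walk a b) :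
    walkProd f p ∈ S := by
  induction p with
  | nil => exact S.one_mem
  | cons h _ ih => exact S.mul_mem (hf _ _ h) ih

theorem pi_t_unitary_general {X : Type} [DecidableEq X] (T : SimpleGraph X)
    (hconn : T.Connected)
    (c : ℂ → X → X → (ell2 X →L[ℂ] ell2 X))
    (hedge : ∀ z ∈ Metric.ball (0 : ℂ) 1, ∀ u v : X, T.Adj u v →
      IsEdgeOp z u v (c z u v))
    (hgeo : ∀ z ∈ Metric.ball (0 : ℂ) 1, ∀ u v : X, ∀ p : T.Walk u v,
      p.length = T.dist u v → c z u v = walkProd (c z) p)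
    {G : Type} [Group G] [MulAction G X]
    (U : G → (ell2 X →L[ℂ] ell2 X))
    (hU : ∀ (g : G) (v : X), U g (delta v) = delta (g • v))
    (x₀ : X) :
    ∀ t : ℝ, 0 < t → t < 1 → ∀ g : G,
      ContinuousLinearMap.adjoint (c (t : ℂ) x₀ (g • x₀) * U g) *
          (c (t : ℂ) x₀ (g • x₀) * U g) = 1 ∧
      (c (t : ℂ) x₀ (g • x₀) * U g) *
          ContinuousLinearMap.adjoint (c (t : ℂ) x₀ (g • x₀) * U g) = 1 := by
  intro t ht0 ht1 g
  have ht : (t : ℂ) ∈ Metric.ball (0 : ℂ) 1 := by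
    simpa [abs_of_pos ht0] using ht1
  have ht_sq : t ^ 2 ≤ 1 := by nlinarith
  obtain ⟨p, hp⟩ := hconn.exists_walk_length_eq_dist x₀ (g • x₀)
  have hc : c t x₀ (g • x₀) ∈ unitary (ell2 X →L[ℂ] ell2 X) := by
    rw [hgeo _ ht _ _ p hp]
    exact walkProd_mem (S := unitary _) (fun u v huv =>
      (hedge _ ht u v huv).mem_unitary ht_sq huv.ne) p
  have hUg := ContinuousLinearMap.mem_unitary_of_apply_delta (MulAction.toPerm g) (hU g)
  rw [← ContinuousLinearMap.star_eq_adjoint]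
  exact Unitary.mem_iff.mp (mul_mem hc hUg)

/-- For every real `t` with `0 < t < 1`, the representation `π_t` is
unitary: `π_t(g)* π_t(g) = I = π_t(g) π_t(g)*` for every `g ∈ G`. -/
theorem pi_t_unitary {X : Type} [DecidableEq X] (T : SimpleGraph X)
    (hconn : T.Connected) (hacyc : T.IsAcyclic)
    (c : ℂ → X → X → (ell2 X →L[ℂ] ell2 X))
    (hedge : ∀ z ∈ Metric.ball (0 : ℂ) 1, ∀ u v : X, T.Adj u v →
      IsEdgeOp z u v (c z u v))
    (hgeo : ∀ z ∈ Metric.ball (0 : ℂ) 1, ∀ u v : X, ∀ p : T.Walk u v,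
      p.length = T.dist u v → c z u v = walkProd (c z) p)
    {G : Type} [Group G] [MulAction G X]
    (hact : ∀ (g : G) (u v : X), T.Adj u v ↔ T.Adj (g • u) (g • v))
    (U : G → (ell2 X →L[ℂ] ell2 X))
    (hU : ∀ (g : G) (v : X), U g (delta v) = delta (g • v))
    (x₀ : X) :
    ∀ t : ℝ, 0 < t → t < 1 → ∀ g : G,
      ContinuousLinearMap.adjoint (c (t : ℂ) x₀ (g • x₀) * U g) *
          (c (t : ℂ) x₀ (g • x₀) * U g) = 1 ∧
      (c (t : ℂ) x₀ (g • x₀) * U g) *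
          ContinuousLinearMap.adjoint (c (t : ℂ) x₀ (g • x₀) * U g) = 1 :=
  pi_t_unitary_general T hconn c hedge hgeo U hU x₀
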